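/- Let t > 0 and let β > Ψ(t). Then there exists a sequence γ : ℕ → ℂ such that the Hankel matrix {γ_{j+k}}_{j,k≥0} belongs to the injective tensor product ℓ¹⊗̌ℓ¹ but ∑_{k≥0} |γ_k|^t (1+k)^β = ∞. -/

import Mathlib

open Filter Finset

/-- The Hankel matrix `{γ_{j+k}}` belongs to the injective tensor product `ℓ¹ ⊗̌ ℓ¹`:
the partial bilinear sums against sequences in the unit ball of `ℓ^∞` are uniformly bounded. -/
def HankelInInj (γ : ℕ → ℂ) : Prop :=
  ∃ C : ℝ, ∀ (N : ℕ) (x y : ℕ → ℂ), (∀ j, ‖x j‖ ≤ 1) → (∀ k, ‖y k‖ ≤ 1) →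
    ‖∑ j ∈ Finset.range (N + 1), ∑ k ∈ Finset.range (N + 1), γ (j + k) * x j * y k‖ ≤ C

/-- The function `Ψ` of Pełczyński–Sukochev: `Ψ(t) = (3/2)t - 1` for `t ≤ 2`, `Ψ(t) = t` for `t > 2`. -/
noncomputable def Psi (t : ℝ) : ℝ := if t ≤ 2 then 3 / 2 * t - 1 else t

open ComplexConjugate

/-!
If the symbol `a` vanishes from `L` on and `2n ≤ L + 1`, the discrete Fourier transform at the
`L`-th roots of unity writes `L · ∑_{j,k<n} a_{j+k} u_j v_k` as `∑_l A(ζ^l) U(ζ^{-l}) V(ζ^{-l})`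
without aliasing, so AM-GM and Parseval bound the Hankel form by
`sup_{|z|=1} |A z| · (‖u‖₂² + ‖v‖₂²) / 2`. For a block of coefficients on `[2^m, 2^(m+1))` only
`2^(m+1)` entries of `u` and `v` matter, so its injective Hankel norm is at most `2^(m+1)` times the
sup norm of the block polynomial.

Let the block polynomials `w_m` have sup norm `≲ 2^(ρm)` and `∑_i |w_m i|^t ≥ 2^(κm)`, and put
`r^m w_m` on `[2^m, 2^(m+1))` with `r^t 2^(κ+β) = 1`. Then every dyadic block contributes a fixed
amount to `∑ |γ_k|^t (1+k)^β`, while the Hankel norms of the blocks form a convergent geometric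
series as soon as `t (1 + ρ) < κ + β`. Rudin–Shapiro polynomials (`ρ = 1/2`, `κ = 1`) reach
`β > 3t/2 - 1`, single spikes (`ρ = κ = 0`) reach `β > t`.
-/

def hankelForm {R : Type*} [CommSemiring R] (a x y : ℕ → R) (n : ℕ) : R :=
  ∑ j ∈ range n, ∑ k ∈ range n, a (j + k) * x j * y k

theorem IsPrimitiveRoot.sum_pow_mul_inv_pow {K : Type*} [Field K] {ζ : K} {L i j : ℕ}
    (hζ : IsPrimitiveRoot ζ L) (hi : i < L) (hj : j < L) :
    ∑ l ∈ range L, ζ ^ (l * i) * ζ⁻¹ ^ (l * j) = if i = j then (L : K) else 0 := by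
  have hζ0 : ζ ≠ 0 := hζ.ne_zero (by omega)
  simp_rw [mul_comm _ i, mul_comm _ j, pow_mul, ← mul_pow]
  split_ifs with hij
  · simp [hij, hζ0]
  · have hne : ζ ^ i * ζ⁻¹ ^ j ≠ 1 := by
      rw [Ne, inv_pow, mul_inv_eq_one₀ (pow_ne_zero _ hζ0)]
      exact fun h => hij (hζ.pow_inj hi hj h)
    rw [geom_sum_eq hne, mul_pow, ← pow_mul, ← pow_mul, mul_comm i, mul_comm j, pow_mul, pow_mul,
      hζ.inv.pow_eq_one, hζ.pow_eq_one]
    simp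

theorem IsPrimitiveRoot.sum_norm_sq_sum_mul_pow {ζ : ℂ} {L n : ℕ} (hζ : IsPrimitiveRoot ζ L)
    (hnL : n ≤ L) (u : ℕ → ℂ) :
    ∑ l ∈ range L, ‖∑ j ∈ range n, u j * ζ ^ (l * j)‖ ^ 2 = L * ∑ j ∈ range n, ‖u j‖ ^ 2 := by
  rcases Nat.eq_zero_or_pos L with rfl | hL
  · simp
  have hconj : conj ζ = ζ⁻¹ := (RCLike.inv_eq_conj (hζ.norm'_eq_one hL.ne')).symm
  suffices h : ((∑ l ∈ range L, ‖∑ j ∈ range n, u j * ζ ^ (l * j)‖ ^ 2 : ℝ) : ℂ) =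
      ((L * ∑ j ∈ range n, ‖u j‖ ^ 2 : ℝ) : ℂ) from mod_cast h
  push_cast
  simp_rw [← Complex.mul_conj', map_sum, map_mul, map_pow, hconj, sum_mul_sum, mul_sum]
  rw [sum_comm]
  refine sum_congr rfl fun i hi => ?_
  rw [sum_comm]
  have hi' := lt_of_lt_of_le (mem_range.1 hi) hnL
  simp_rw [mul_mul_mul_comm _ (ζ ^ _), ← mul_sum]
  rw [sum_eq_single_of_mem i hi fun j hj hji => by
    rw [hζ.sum_pow_mul_inv_pow hi' (lt_of_lt_of_le (mem_range.1 hj) hnL), if_neg hji.symm,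
      mul_zero]]
  rw [hζ.sum_pow_mul_inv_pow hi' hi', if_pos rfl, mul_comm]

theorem IsPrimitiveRoot.mul_hankelForm_eq {K : Type*} [Field K] {ζ : K} {L n : ℕ}
    (hζ : IsPrimitiveRoot ζ L) (hnL : 2 * n ≤ L + 1) (a u v : ℕ → K) :
    L * hankelForm a u v n = ∑ l ∈ range L, (∑ s ∈ range L, a s * ζ ^ (l * s)) *
      (∑ j ∈ range n, u j * ζ⁻¹ ^ (l * j)) * (∑ k ∈ range n, v k * ζ⁻¹ ^ (l * k)) := by
  have hcoeff : ∀ j ∈ range n, ∀ k ∈ range n, (L : K) * a (j + k) =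
      ∑ s ∈ range L, a s * ∑ l ∈ range L, ζ ^ (l * s) * ζ⁻¹ ^ (l * (j + k)) := by
    intro j hj k hk
    have hjk : j + k < L := by simp only [mem_range] at hj hk; omega
    rw [sum_eq_single_of_mem (j + k) (mem_range.2 hjk) fun s hs hne => by
      rw [hζ.sum_pow_mul_inv_pow (mem_range.1 hs) hjk, if_neg hne, mul_zero]]
    rw [hζ.sum_pow_mul_inv_pow hjk hjk, if_pos rfl, mul_comm]
  have hexpand : ∀ l, (∑ s ∈ range L, a s * ζ ^ (l * s)) *
      (∑ j ∈ range n, u j * ζ⁻¹ ^ (l * j)) * (∑ k ∈ range n, v k * ζ⁻¹ ^ (l * k)) =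
      ∑ j ∈ range n, ∑ k ∈ range n, ∑ s ∈ range L,
        a s * (ζ ^ (l * s) * ζ⁻¹ ^ (l * (j + k))) * u j * v k := by
    intro l
    simp_rw [mul_sum, sum_mul]
    rw [sum_comm]
    refine sum_congr rfl fun j _ => sum_congr rfl fun k _ => sum_congr rfl fun s _ => ?_
    rw [mul_add, pow_add]
    ring
  simp_rw [hexpand, hankelForm, mul_sum]
  conv_rhs => rw [sum_comm]
  refine sum_congr rfl fun j hj => ?_
  conv_rhs => rw [sum_comm]
  refine sum_congr rfl fun k hk => ?_
  rw [← mul_assoc, ← mul_assoc, hcoeff j hj k hk, sum_mul, sum_mul, sum_comm]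
  simp_rw [mul_sum, sum_mul]

theorem norm_hankelForm_le {a : ℕ → ℂ} {L n : ℕ} {B : ℝ} (hnL : 2 * n ≤ L + 1)
    (hB : ∀ z : ℂ, ‖z‖ = 1 → ‖∑ s ∈ range L, a s * z ^ s‖ ≤ B) (u v : ℕ → ℂ) :
    ‖hankelForm a u v n‖ ≤ B / 2 * (∑ j ∈ range n, ‖u j‖ ^ 2 + ∑ k ∈ range n, ‖v k‖ ^ 2) := by
  have hB0 : 0 ≤ B := (norm_nonneg _).trans (hB 1 norm_one)
  rcases Nat.eq_zero_or_pos L with rfl | hL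
  · obtain rfl : n = 0 := by omega
    simp [hankelForm]
  have hζ := Complex.isPrimitiveRoot_exp L hL.ne'
  set ζ := Complex.exp (2 * Real.pi * Complex.I / L)
  set U : ℕ → ℂ := fun l => ∑ j ∈ range n, u j * ζ⁻¹ ^ (l * j)
  set V : ℕ → ℂ := fun l => ∑ k ∈ range n, v k * ζ⁻¹ ^ (l * k)
  have hA : ∀ l, ‖∑ s ∈ range L, a s * ζ ^ (l * s)‖ ≤ B := fun l => by
    simpa only [pow_mul] using hB (ζ ^ l) (by rw [norm_pow, hζ.norm'_eq_one hL.ne', one_pow])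
  have hamgm : ∀ l, ‖∑ s ∈ range L, a s * ζ ^ (l * s)‖ * ‖U l‖ * ‖V l‖ ≤
      B / 2 * (‖U l‖ ^ 2 + ‖V l‖ ^ 2) := fun l => by
    rw [mul_assoc]
    nlinarith [hA l, mul_nonneg (norm_nonneg (U l)) (norm_nonneg (V l)),
      sq_nonneg (‖U l‖ - ‖V l‖)]
  have hparseval := hζ.inv.sum_norm_sq_sum_mul_pow (by omega : n ≤ L)
  have hmain : (L : ℝ) * ‖hankelForm a u v n‖ ≤
      L * (B / 2 * (∑ j ∈ range n, ‖u j‖ ^ 2 + ∑ k ∈ range n, ‖v k‖ ^ 2)) := by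
    calc (L : ℝ) * ‖hankelForm a u v n‖ = ‖(L : ℂ) * hankelForm a u v n‖ := by simp
      _ ≤ ∑ l ∈ range L, ‖∑ s ∈ range L, a s * ζ ^ (l * s)‖ * ‖U l‖ * ‖V l‖ := by
        rw [hζ.mul_hankelForm_eq hnL]
        exact (norm_sum_le _ _).trans_eq (sum_congr rfl fun l _ => by rw [norm_mul, norm_mul])
      _ ≤ ∑ l ∈ range L, B / 2 * (‖U l‖ ^ 2 + ‖V l‖ ^ 2) := sum_le_sum fun l _ => hamgm l
      _ = _ := by rw [← mul_sum, sum_add_distrib, hparseval, hparseval]; ring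
  exact le_of_mul_le_mul_left hmain (by exact_mod_cast hL)

theorem hankelForm_indicator_Iio {R : Type*} [CommSemiring R] {a : ℕ → R} {K : ℕ}
    (ha : ∀ s, K ≤ s → a s = 0) (x y : ℕ → R) (n : ℕ) :
    hankelForm a ((Set.Iio K).indicator x) ((Set.Iio K).indicator y) n = hankelForm a x y n := by
  refine sum_congr rfl fun j _ => sum_congr rfl fun k _ => ?_
  by_cases hj : j < K
  · by_cases hk : k < K
    · simp [hj, hk]
    · simp [ha (j + k) (by omega)]
  · simp [ha (j + k) (by omega)]

theorem sum_norm_sq_indicator_Iio_le {E : Type*} [SeminormedAddCommGroup E] {x : ℕ → E}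
    (hx : ∀ j, ‖x j‖ ≤ 1) (K n : ℕ) :
    ∑ j ∈ range n, ‖(Set.Iio K).indicator x j‖ ^ 2 ≤ K := by
  calc ∑ j ∈ range n, ‖(Set.Iio K).indicator x j‖ ^ 2
      ≤ ∑ j ∈ range n, (Set.Iio K).indicator 1 j := sum_le_sum fun j _ => by
        by_cases hj : j < K <;> simp [hj, pow_le_one₀ (norm_nonneg _) (hx j)]
    _ = #{j ∈ range n | j < K} := by simp [Set.indicator_apply]
    _ ≤ K := by
      exact_mod_cast (card_le_card fun j hj => mem_range.2 (mem_filter.1 hj).2).trans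
        (card_range K).le

section Dyadic

variable {R : Type*}

/-- The block `b m` occupies the indices `[2^m, 2^(m+1))`. -/
def dyadicSeq [Zero R] (b : ℕ → ℕ → R) (n : ℕ) : R :=
  if n = 0 then 0 else b (Nat.log 2 n) (n - 2 ^ Nat.log 2 n)

def dyadicPart [Zero R] (γ : ℕ → R) (m n : ℕ) : R :=
  if Nat.log 2 n = m then γ n else 0

theorem dyadicSeq_two_pow_add [Zero R] (b : ℕ → ℕ → R) {m i : ℕ} (hi : i < 2 ^ m) :
    dyadicSeq b (2 ^ m + i) = b m i := by
  have hlog : Nat.log 2 (2 ^ m + i) = m :=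
    Nat.log_eq_of_pow_le_of_lt_pow (by omega) (by rw [pow_succ]; omega)
  simp [dyadicSeq, hlog]

theorem dyadicPart_dyadicSeq_of_notMem [Zero R] (b : ℕ → ℕ → R) {m n : ℕ}
    (hn : n ∉ Ico (2 ^ m) (2 ^ (m + 1))) : dyadicPart (dyadicSeq b) m n = 0 := by
  unfold dyadicPart dyadicSeq
  split_ifs with hlog hn0 <;> try rfl
  subst hlog
  exact absurd (mem_Ico.2 ⟨Nat.pow_log_le_self 2 hn0, Nat.lt_pow_succ_log_self one_lt_two n⟩) hn

theorem sum_dyadicPart [AddCommMonoid R] (γ : ℕ → R) {M n : ℕ} (hn : n < 2 ^ (M + 1)) :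
    ∑ m ∈ range (M + 1), dyadicPart γ m n = γ n := by
  simp only [dyadicPart, sum_ite_eq, mem_range, Nat.log_lt_of_lt_pow' M.succ_ne_zero hn, if_true]

theorem hankelForm_eq_sum_dyadicPart [CommSemiring R] (γ x y : ℕ → R) (N : ℕ) :
    hankelForm γ x y (N + 1) = ∑ m ∈ range (N + 1), hankelForm (dyadicPart γ m) x y (N + 1) := by
  simp only [hankelForm]
  conv_rhs => rw [sum_comm]
  refine sum_congr rfl fun j hj => ?_
  conv_rhs => rw [sum_comm]
  refine sum_congr rfl fun k hk => ?_
  have hjk : j + k < 2 ^ (N + 1) := by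
    have := N.lt_two_pow_self
    simp only [mem_range] at hj hk
    rw [pow_succ]; omega
  rw [← sum_mul, ← sum_mul, sum_dyadicPart γ hjk]

theorem sum_dyadicPart_dyadicSeq_mul_pow [CommSemiring R] (b : ℕ → ℕ → R) {m L : ℕ}
    (hL : 2 ^ (m + 1) ≤ L) (z : R) :
    ∑ s ∈ range L, dyadicPart (dyadicSeq b) m s * z ^ s =
      z ^ 2 ^ m * ∑ i ∈ range (2 ^ m), b m i * z ^ i := by
  have hsub : Ico (2 ^ m) (2 ^ (m + 1)) ⊆ range L := fun s hs => by
    simp only [mem_Ico, mem_range] at hs ⊢; omega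
  rw [← sum_subset hsub fun s _ hs => by rw [dyadicPart_dyadicSeq_of_notMem b hs, zero_mul],
    sum_Ico_eq_sum_range, show 2 ^ (m + 1) - 2 ^ m = 2 ^ m by rw [pow_succ]; omega, mul_sum]
  refine sum_congr rfl fun i hi => ?_
  have hi := mem_range.1 hi
  rw [dyadicPart, if_pos (Nat.log_eq_of_pow_le_of_lt_pow (by omega) (by rw [pow_succ]; omega)),
    dyadicSeq_two_pow_add b hi, pow_add]
  ring

end Dyadic

theorem norm_hankelForm_dyadicPart_dyadicSeq_le {b : ℕ → ℕ → ℂ} {m : ℕ} {D : ℝ}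
    (hD : ∀ z : ℂ, ‖z‖ = 1 → ‖∑ i ∈ range (2 ^ m), b m i * z ^ i‖ ≤ D)
    {x y : ℕ → ℂ} (hx : ∀ j, ‖x j‖ ≤ 1) (hy : ∀ k, ‖y k‖ ≤ 1) (n : ℕ) :
    ‖hankelForm (dyadicPart (dyadicSeq b) m) x y n‖ ≤ D * 2 ^ (m + 1) := by
  have hD0 : 0 ≤ D := (norm_nonneg _).trans (hD 1 norm_one)
  have hsupp : ∀ s, 2 ^ (m + 1) ≤ s → dyadicPart (dyadicSeq b) m s = 0 := fun s hs =>
    dyadicPart_dyadicSeq_of_notMem b fun h => by simp only [mem_Ico] at h; omega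
  have hB : ∀ z : ℂ, ‖z‖ = 1 →
      ‖∑ s ∈ range (2 * n + 2 ^ (m + 1)), dyadicPart (dyadicSeq b) m s * z ^ s‖ ≤ D := by
    intro z hz
    rw [sum_dyadicPart_dyadicSeq_mul_pow b (Nat.le_add_left _ _), norm_mul, norm_pow, hz,
      one_pow, one_mul]
    exact hD z hz
  rw [← hankelForm_indicator_Iio hsupp]
  refine (norm_hankelForm_le (Nat.le_succ_of_le (Nat.le_add_right _ _)) hB _ _).trans ?_
  have hx' := sum_norm_sq_indicator_Iio_le hx (2 ^ (m + 1)) n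
  have hy' := sum_norm_sq_indicator_Iio_le hy (2 ^ (m + 1)) n
  push_cast at hx' hy'
  nlinarith

theorem hankelInInj_dyadicSeq {b : ℕ → ℕ → ℂ} (D : ℕ → ℝ)
    (hD : ∀ m (z : ℂ), ‖z‖ = 1 → ‖∑ i ∈ range (2 ^ m), b m i * z ^ i‖ ≤ D m)
    (hsum : Summable fun m => D m * 2 ^ (m + 1)) : HankelInInj (dyadicSeq b) := by
  refine ⟨∑' m, D m * 2 ^ (m + 1), fun N x y hx hy => ?_⟩
  have hD0 : ∀ m, 0 ≤ D m * 2 ^ (m + 1) := fun m =>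
    mul_nonneg ((norm_nonneg _).trans (hD m 1 norm_one)) (by positivity)
  calc ‖hankelForm (dyadicSeq b) x y (N + 1)‖
      ≤ ∑ m ∈ range (N + 1), ‖hankelForm (dyadicPart (dyadicSeq b) m) x y (N + 1)‖ := by
        rw [hankelForm_eq_sum_dyadicPart]; exact norm_sum_le _ _
    _ ≤ ∑ m ∈ range (N + 1), D m * 2 ^ (m + 1) := sum_le_sum fun m _ =>
        norm_hankelForm_dyadicPart_dyadicSeq_le (hD m) hx hy _
    _ ≤ ∑' m, D m * 2 ^ (m + 1) := hsum.sum_le_tsum _ fun m _ => hD0 m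

theorem not_summable_of_le_sum_dyadic {f : ℕ → ℝ} (hf : ∀ n, 0 ≤ f n) {δ : ℝ} (hδ : 0 < δ)
    (h : ∀ m, δ ≤ ∑ i ∈ range (2 ^ m), f (2 ^ m + i)) : ¬ Summable f := by
  have hpartial : ∀ M : ℕ, M * δ ≤ ∑ n ∈ range (2 ^ M), f n := by
    intro M
    induction M with
    | zero => simpa using hf 0
    | succ M ih =>
      rw [pow_succ, mul_two, sum_range_add]
      push_cast
      linarith [h M]
  intro hsum
  obtain ⟨M, hM⟩ := exists_nat_gt ((∑' n, f n) / δ)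
  have := (hpartial M).trans (hsum.sum_le_tsum _ fun n _ => hf n)
  rw [div_lt_iff₀ hδ] at hM
  linarith

theorem rpow_pow_mul_min_le_rpow (β : ℝ) {m : ℕ} {x : ℝ} (hx : 2 ^ m ≤ x)
    (hx' : x ≤ 2 ^ (m + 1)) :
    ((2 : ℝ) ^ β) ^ m * min 1 ((2 : ℝ) ^ β) ≤ x ^ β := by
  have h2m : (0 : ℝ) < 2 ^ m := by positivity
  rcases le_total 0 β with hβ | hβ
  · calc ((2 : ℝ) ^ β) ^ m * min 1 ((2 : ℝ) ^ β) ≤ ((2 : ℝ) ^ β) ^ m * 1 := by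
          gcongr; exact min_le_left _ _
      _ = ((2 : ℝ) ^ m) ^ β := by rw [mul_one, Real.rpow_pow_comm zero_le_two]
      _ ≤ x ^ β := Real.rpow_le_rpow h2m.le hx hβ
  · calc ((2 : ℝ) ^ β) ^ m * min 1 ((2 : ℝ) ^ β) ≤ ((2 : ℝ) ^ β) ^ m * 2 ^ β := by
          gcongr; exact min_le_right _ _
      _ = ((2 : ℝ) ^ (m + 1)) ^ β := by rw [← pow_succ, Real.rpow_pow_comm zero_le_two]
      _ ≤ x ^ β := Real.rpow_le_rpow_of_nonpos (h2m.trans_le hx) hx' hβ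

/-- The scale of the `m`-th block is `r ^ m`: the strict inequality makes the Hankel norms of the
blocks summable, the equation keeps each dyadic piece of the weighted sum bounded below. -/
theorem exists_block_scale {t β ρ κ : ℝ} (ht : 0 < t) (hβ : t * (1 + ρ) < κ + β) :
    ∃ r : ℝ, 0 ≤ r ∧ r * 2 ^ ρ * 2 < 1 ∧ r ^ t * 2 ^ κ * 2 ^ β = 1 := by
  refine ⟨2 ^ (-((κ + β) / t)), by positivity, ?_, ?_⟩
  · rw [← Real.rpow_add two_pos, ← Real.rpow_add_one two_ne_zero]
    refine Real.rpow_lt_one_of_one_lt_of_neg one_lt_two ?_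
    have : 1 + ρ < (κ + β) / t := by rw [lt_div_iff₀ ht]; linarith
    linarith
  · rw [← Real.rpow_mul zero_le_two, ← Real.rpow_add two_pos, ← Real.rpow_add two_pos]
    field_simp
    simp

theorem exists_hankelInInj_not_summable_of_blocks {t β ρ κ D : ℝ} (ht : 0 < t)
    (hβ : t * (1 + ρ) < κ + β) (w : ℕ → ℕ → ℂ)
    (hD : ∀ m (z : ℂ), ‖z‖ = 1 → ‖∑ i ∈ range (2 ^ m), w m i * z ^ i‖ ≤ D * ((2 : ℝ) ^ ρ) ^ m)
    (hmass : ∀ m, ((2 : ℝ) ^ κ) ^ m ≤ ∑ i ∈ range (2 ^ m), ‖w m i‖ ^ t) :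
    ∃ γ : ℕ → ℂ, HankelInInj γ ∧ ¬ Summable fun k : ℕ => ‖γ k‖ ^ t * (1 + (k : ℝ)) ^ β := by
  obtain ⟨r, hr0, hr_lt, hr_eq⟩ := exists_block_scale ht hβ
  have hnorm : ∀ m i, ‖((r ^ m : ℝ) : ℂ) * w m i‖ = r ^ m * ‖w m i‖ := fun m i => by
    rw [norm_mul, Complex.norm_of_nonneg (by positivity)]
  refine ⟨dyadicSeq fun m i => ((r ^ m : ℝ) : ℂ) * w m i,
    hankelInInj_dyadicSeq (fun m => r ^ m * (D * (2 ^ ρ) ^ m)) (fun m z hz => ?_) ?_, ?_⟩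
  · simp_rw [mul_assoc, ← mul_sum]
    rw [norm_mul, Complex.norm_of_nonneg (by positivity)]
    gcongr
    exact hD m z hz
  · refine ((summable_geometric_of_lt_one (by positivity) hr_lt).mul_left (2 * D)).congr
      fun m => ?_
    ring
  · refine not_summable_of_le_sum_dyadic (fun n => by positivity)
      (lt_min one_pos (by positivity) : (0 : ℝ) < min 1 (2 ^ β)) fun m => ?_
    have hrm : (r ^ t) ^ m * ((2 : ℝ) ^ κ) ^ m * ((2 : ℝ) ^ β) ^ m = 1 := by
      rw [← mul_pow, ← mul_pow, hr_eq, one_pow]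
    calc min 1 ((2 : ℝ) ^ β)
        = (r ^ t) ^ m * (((2 : ℝ) ^ β) ^ m * min 1 (2 ^ β)) * ((2 : ℝ) ^ κ) ^ m := by
          linear_combination -(min 1 ((2 : ℝ) ^ β)) * hrm
      _ ≤ (r ^ t) ^ m * (((2 : ℝ) ^ β) ^ m * min 1 (2 ^ β)) *
          ∑ i ∈ range (2 ^ m), ‖w m i‖ ^ t := by
          gcongr; exact hmass m
      _ ≤ _ := by
          rw [mul_sum]
          refine sum_le_sum fun i hi => ?_
          have hi' : (i : ℝ) + 1 ≤ 2 ^ m := by exact_mod_cast mem_range.1 hi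
          have hweight := rpow_pow_mul_min_le_rpow β (x := 1 + ((2 ^ m + i : ℕ) : ℝ))
            (by push_cast; linarith) (by push_cast; rw [pow_succ]; linarith)
          rw [dyadicSeq_two_pow_add _ (mem_range.1 hi), hnorm, Real.mul_rpow (by positivity)
            (norm_nonneg _), ← Real.rpow_pow_comm hr0]
          calc _ = (r ^ t) ^ m * ‖w m i‖ ^ t * (((2 : ℝ) ^ β) ^ m * min 1 (2 ^ β)) := by ring
            _ ≤ _ := by gcongr

def rudinShapiro : ℕ → (ℕ → ℂ) × (ℕ → ℂ)
  | 0 => (fun _ => 1, fun _ => 1)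
  | m + 1 =>
    (fun n => if n < 2 ^ m then (rudinShapiro m).1 n else (rudinShapiro m).2 (n - 2 ^ m),
     fun n => if n < 2 ^ m then (rudinShapiro m).1 n else -(rudinShapiro m).2 (n - 2 ^ m))

theorem norm_rudinShapiro (m n : ℕ) :
    ‖(rudinShapiro m).1 n‖ = 1 ∧ ‖(rudinShapiro m).2 n‖ = 1 := by
  induction m generalizing n with
  | zero => simp [rudinShapiro]
  | succ m ih => by_cases h : n < 2 ^ m <;> simp [rudinShapiro, h, ih]

theorem sum_rudinShapiro_succ (m : ℕ) (z : ℂ) :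
    ∑ n ∈ range (2 ^ (m + 1)), (rudinShapiro (m + 1)).1 n * z ^ n =
        ∑ n ∈ range (2 ^ m), (rudinShapiro m).1 n * z ^ n +
          z ^ 2 ^ m * ∑ n ∈ range (2 ^ m), (rudinShapiro m).2 n * z ^ n ∧
    ∑ n ∈ range (2 ^ (m + 1)), (rudinShapiro (m + 1)).2 n * z ^ n =
        ∑ n ∈ range (2 ^ m), (rudinShapiro m).1 n * z ^ n -
          z ^ 2 ^ m * ∑ n ∈ range (2 ^ m), (rudinShapiro m).2 n * z ^ n := by
  simp only [pow_succ 2 m, mul_two, sum_range_add, rudinShapiro, mul_sum, sub_eq_add_neg,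
    ← sum_neg_distrib]
  constructor <;> congr 1 <;> refine sum_congr rfl fun n hn => ?_ <;>
    simp [mem_range.1 hn, pow_add] <;> ring

theorem norm_sq_add_norm_sq_sum_rudinShapiro (m : ℕ) {z : ℂ} (hz : ‖z‖ = 1) :
    ‖∑ n ∈ range (2 ^ m), (rudinShapiro m).1 n * z ^ n‖ ^ 2 +
      ‖∑ n ∈ range (2 ^ m), (rudinShapiro m).2 n * z ^ n‖ ^ 2 = 2 ^ (m + 1) := by
  induction m with
  | zero => norm_num [rudinShapiro]
  | succ m ih =>
    obtain ⟨hP, hQ⟩ := sum_rudinShapiro_succ m z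
    rw [hP, hQ, pow_succ 2 (m + 1), ← ih]
    have hpar := parallelogram_law_with_norm ℂ (∑ n ∈ range (2 ^ m), (rudinShapiro m).1 n * z ^ n)
      (z ^ 2 ^ m * ∑ n ∈ range (2 ^ m), (rudinShapiro m).2 n * z ^ n)
    rw [norm_mul (z ^ 2 ^ m), norm_pow, hz, one_pow, one_mul] at hpar
    linear_combination hpar

theorem norm_sum_rudinShapiro_le (m : ℕ) {z : ℂ} (hz : ‖z‖ = 1) :
    ‖∑ n ∈ range (2 ^ m), (rudinShapiro m).1 n * z ^ n‖ ≤ √2 ^ (m + 1) := by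
  refine le_of_sq_le_sq ?_ (by positivity)
  rw [← pow_mul, mul_comm, pow_mul, Real.sq_sqrt zero_le_two,
    ← norm_sq_add_norm_sq_sum_rudinShapiro m hz]
  exact le_add_of_nonneg_right (sq_nonneg _)

/-- Theorem 6.7 (ii) of [PS]: for `t > 0` and `β > Ψ(t)`, there is a Hankel matrix in
`ℓ¹ ⊗̌ ℓ¹` with `∑_k |γ_k|^t (1+k)^β = ∞`. -/
theorem exists_hankel_inj_weighted_not_summable_of_gt_Psi (t β : ℝ) (ht : 0 < t)
    (hβ : Psi t < β) :
    ∃ γ : ℕ → ℂ, HankelInInj γ ∧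
      ¬ Summable fun k : ℕ => ‖γ k‖ ^ t * (1 + (k : ℝ)) ^ β := by
  rcases le_or_gt t 2 with ht2 | ht2
  · have hβ' : t * (1 + 1 / 2) < 1 + β := by rw [Psi, if_pos ht2] at hβ; linarith
    refine exists_hankelInInj_not_summable_of_blocks ht hβ' (fun m => (rudinShapiro m).1)
      (D := √2) (fun m z hz => ?_) fun m => ?_
    · rw [← Real.sqrt_eq_rpow, ← pow_succ']
      exact norm_sum_rudinShapiro_le m hz
    · simp [(norm_rudinShapiro m _).1]
  · have hβ' : t * (1 + 0) < 0 + β := by rw [Psi, if_neg ht2.not_ge] at hβ; linarith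
    refine exists_hankelInInj_not_summable_of_blocks ht hβ' (fun _ i => if i = 0 then 1 else 0)
      (D := 1) (fun m z _ => ?_) fun m => ?_
    · simp
    · simpa using single_le_sum (f := fun i => ‖(if i = 0 then (1 : ℂ) else 0)‖ ^ t)
        (fun i _ => by positivity) (mem_range.2 (Nat.two_pow_pos m))
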